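/- Assume log P[L > x] ∼ α·log P[A > x] as x → ∞ for some α > 0. Then for every ε > 0 there exists n₀ > 0 such that for every n ≥ n₀ and every b with n^{1+ε}·P[A > b] ≤ 1, one has | (−log P[N_b > n])/(α·log n) − 1 | ≤ ε. -/

import Mathlib

/-!
Write `Ḡ`, `F̄` for the tails of `A` and `L`. For any level `x ≤ b`,
`P[L_b > x] (1 - Ḡ x)^n ≤ P[N_b > n] ≤ P[L_b > x] + (1 - Ḡ x)^n`, because `N_b > n` holds when
`L_b > x ≥ A_1, …, A_n` and forces `L_b > x` or `A_1, …, A_n ≤ x`; moreover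
`P[L_b > x] = (F̄ x - F̄ b) / (1 - F̄ b)`. The hypothesis gives `Ḡ^(α (1 + δ)) ≤ F̄ ≤ Ḡ^(α (1 - δ))`
far out. For the lower bound take `Ḡ x = 1/n`, so that `(1 - Ḡ x)^n ≥ e^(-2)` and
`F̄ x ≥ n^(-α (1 + δ))`; for the upper bound take `Ḡ x = α log n / n`, so that
`(1 - Ḡ x)^n ≤ n^(-α)` and `F̄ x ≤ n^(-α (1 - δ)^2)`. The condition `n^(1+ε) Ḡ b ≤ 1` puts both
levels below `b` and makes `F̄ b ≤ n^(-α (1 + ε) (1 - δ))` negligible.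
-/

open MeasureTheory ProbabilityTheory Filter Set

/-- The number of retransmissions: the first index `k ≥ 1` with `A k ω > X ω`,
viewed in `ℕ∞` (so it is `⊤` if no such index exists). -/
noncomputable def retransTime {Ω : Type*} (A : ℕ → Ω → ℝ) (X : Ω → ℝ) (ω : Ω) : ℕ∞ :=
  sInf {m : ℕ∞ | ∃ k : ℕ, m = (k : ℕ∞) ∧ 1 ≤ k ∧ X ω < A k ω}

open Real

lemma rpow_le_and_le_rpow_of_abs_log_div_sub_one_lt {f g c δ : ℝ} (hf : 0 < f) (hg : 0 < g)
    (hg1 : g < 1) (hc : 0 < c) (h : |log f / (c * log g) - 1| < δ) :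
    g ^ (c * (1 + δ)) ≤ f ∧ f ≤ g ^ (c * (1 - δ)) := by
  have hneg : c * log g < 0 := mul_neg_of_pos_of_neg hc (log_neg hg hg1)
  obtain ⟨hhi, hlo⟩ := abs_sub_lt_iff.mp h
  have hlo' : (1 + δ) * (c * log g) < log f := (div_lt_iff_of_neg hneg).mp (by linarith)
  have hhi' : log f < (1 - δ) * (c * log g) := (lt_div_iff_of_neg hneg).mp (by linarith)
  rw [rpow_def_of_pos hg, rpow_def_of_pos hg, ← exp_log hf, exp_le_exp, exp_le_exp]
  constructor <;> linarith

lemma eventually_rpow_le_and_le_rpow {G F : ℝ → ℝ} {α δ : ℝ} (hα : 0 < α)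
    (hG0 : Tendsto G atTop (nhds 0)) (hGpos : ∀ x, 0 ≤ x → 0 < G x)
    (hFpos : ∀ x, 0 ≤ x → 0 < F x)
    (hlog : Tendsto (fun x => log (F x) / (α * log (G x))) atTop (nhds 1)) (hδ : 0 < δ) :
    ∀ᶠ x in atTop, G x ^ (α * (1 + δ)) ≤ F x ∧ F x ≤ G x ^ (α * (1 - δ)) := by
  filter_upwards [eventually_ge_atTop 0, hG0.eventually_lt_const one_pos,
    hlog.eventually (Metric.ball_mem_nhds 1 hδ)] with x hx hG1 hlogx
  exact rpow_le_and_le_rpow_of_abs_log_div_sub_one_lt (hFpos x hx) (hGpos x hx) hG1 hα hlogx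

lemma le_rpow_mul_of_le_rpow {f g x s c : ℝ} (hx : 0 ≤ x) (hg : 0 ≤ g) (hc : 0 ≤ c)
    (hf : f ≤ g ^ c) (hgx : g ≤ x ^ s) : f ≤ x ^ (s * c) := by
  rw [rpow_mul hx]
  exact hf.trans (rpow_le_rpow hg hgx hc)

lemma exists_mem_Ico_eq_of_antitone {G : ℝ → ℝ} (hG : Continuous G) (hGanti : Antitone G)
    {M b t : ℝ} (hb : G b < t) (hM : t ≤ G M) : ∃ x ∈ Ico M b, G x = t := by
  obtain ⟨x, hx, hGx⟩ := intermediate_value_Icc' (hGanti.reflect_lt (hb.trans_le hM)).le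
    hG.continuousOn ⟨hb.le, hM⟩
  exact ⟨x, ⟨hx.1, hx.2.lt_of_ne (by rintro rfl; exact hb.ne hGx)⟩, hGx⟩

lemma lt_inv_of_le_rpow_neg {x g ε : ℝ} (hx : 1 < x) (hε : 0 < ε) (h : g ≤ x ^ (-(1 + ε))) :
    g < x⁻¹ := by
  rw [← rpow_neg_one]
  exact h.trans_lt (rpow_lt_rpow_of_exponent_lt hx (by linarith))

lemma exp_neg_two_le_one_sub_inv_pow {n : ℕ} (hn : 2 ≤ n) : exp (-2) ≤ (1 - (n : ℝ)⁻¹) ^ n := by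
  have hn' : (2 : ℝ) ≤ n := by exact_mod_cast hn
  set t := (n : ℝ)⁻¹
  have ht0 : 0 ≤ t := by positivity
  have ht2 : t ≤ 2⁻¹ := inv_anti₀ two_pos hn'
  have hexp : exp (-(2 * t)) ≤ 1 - t := by
    rw [exp_neg, inv_le_iff_one_le_mul₀' (exp_pos _)]
    nlinarith [add_one_le_exp (2 * t)]
  calc exp (-2) = exp (-(2 * t)) ^ n := by
        rw [← exp_nat_mul]; congr 1; simp only [t]; field_simp
    _ ≤ (1 - t) ^ n := pow_le_pow_left₀ (exp_pos _).le hexp n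

lemma one_sub_mul_log_div_pow_le {n : ℕ} {a : ℝ} (hn : 0 < n) (h : a * log n ≤ n) :
    (1 - a * log n / n) ^ n ≤ (n : ℝ) ^ (-a) := by
  calc _ ≤ exp (-(a * log n)) := one_sub_div_pow_le_exp_neg h
    _ = _ := by rw [rpow_def_of_pos (by exact_mod_cast hn)]; ring_nf

lemma abs_neg_log_div_sub_one_le {x p α ε : ℝ} (hx : 1 < x) (hα : 0 < α)
    (hlo : x ^ (-(α * (1 + ε))) ≤ p) (hhi : p ≤ x ^ (-(α * (1 - ε)))) :
    |-log p / (α * log x) - 1| ≤ ε := by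
  have hx0 : 0 < x := by linarith
  have hαx : 0 < α * log x := mul_pos hα (log_pos hx)
  have hlo' := log_le_log (by positivity) hlo
  have hhi' := log_le_log ((rpow_pos_of_pos hx0 _).trans_le hlo) hhi
  rw [log_rpow hx0] at hlo' hhi'
  rw [abs_sub_le_iff, sub_le_iff_le_add', sub_le_comm, div_le_iff₀ hαx, le_div_iff₀ hαx]
  constructor <;> linarith

lemma eventually_le_natCast_rpow (c : ℝ) {a : ℝ} (ha : 0 < a) :
    ∀ᶠ n : ℕ in atTop, c ≤ (n : ℝ) ^ a :=
  ((tendsto_rpow_atTop ha).comp tendsto_natCast_atTop_atTop).eventually_ge_atTop c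

lemma eventually_mul_log_le_natCast_rpow (a : ℝ) {δ : ℝ} (hδ : 0 < δ) :
    ∀ᶠ n : ℕ in atTop, a * log n ≤ (n : ℝ) ^ δ := by
  refine (tendsto_natCast_atTop_atTop (R := ℝ)).eventually (p := fun x => a * log x ≤ x ^ δ) ?_
  filter_upwards [((isLittleO_log_rpow_atTop hδ).const_mul_left a).bound one_pos,
    eventually_ge_atTop 0] with x hx hx0
  rw [one_mul, norm_of_nonneg (rpow_nonneg hx0 δ)] at hx
  exact (le_abs_self _).trans hx

section TailBounds

variable {G F : ℝ → ℝ} {P : ℕ → ℝ → ℝ} {α ε : ℝ}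

lemma eventually_exists_inv_level (hα : 0 < α) (hε : 0 < ε) (hGcont : Continuous G)
    (hGanti : Antitone G) (hGpos : ∀ x, 0 ≤ x → 0 < G x) (hG0 : Tendsto G atTop (nhds 0))
    (hFpos : ∀ x, 0 ≤ x → 0 < F x)
    (hlog : Tendsto (fun x => log (F x) / (α * log (G x))) atTop (nhds 1)) :
    ∀ᶠ n : ℕ in atTop, ∀ b, G b ≤ (n : ℝ) ^ (-(1 + ε)) →
      ∃ y ∈ Icc 0 b, G y = (n : ℝ)⁻¹ ∧ exp 2 * (n : ℝ) ^ (-(α * (1 + ε))) ≤ F y - F b := by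
  set δ := ε / (2 * (2 + ε)) with hδ
  have hδ0 : 0 < δ := by positivity
  have hδε : δ < ε := by rw [hδ, div_lt_iff₀ (by positivity)]; nlinarith
  -- this choice of `δ` makes the bound on `F b` smaller than the one on `F y` by `n ^ (α ε / 2)`
  have hexp : -(1 + ε) * (α * (1 - δ)) = -(α * (1 + δ)) - α * ε / 2 := by
    rw [hδ]; field_simp; ring
  obtain ⟨M, hM⟩ := eventually_atTop.mp ((eventually_rpow_le_and_le_rpow hα hG0 hGpos hFpos hlog
    hδ0).and (eventually_ge_atTop 0))
  filter_upwards [eventually_gt_atTop 1,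
    eventually_le_natCast_rpow (G M)⁻¹ one_pos,
    eventually_le_natCast_rpow 2 (by positivity : 0 < α * ε / 2),
    eventually_le_natCast_rpow (2 * exp 2) (mul_pos hα (sub_pos.mpr hδε))]
    with n hn1 hnM hn_half hn_exp b hGb
  have hn1' : (1 : ℝ) < n := by exact_mod_cast hn1
  have hn0 : (0 : ℝ) < n := by linarith
  have hGM : 0 < G M := hGpos M (hM M le_rfl).2
  obtain ⟨y, ⟨hMy, hyb⟩, hGy⟩ := exists_mem_Ico_eq_of_antitone hGcont hGanti
    (lt_inv_of_le_rpow_neg hn1' hε hGb) (inv_le_of_inv_le₀ hGM (by simpa using hnM))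
  have hFy : (n : ℝ) ^ (-(α * (1 + δ))) ≤ F y := by
    have := (hM y hMy).1.1
    rwa [hGy, inv_rpow hn0.le, ← rpow_neg hn0.le] at this
  have hFb : F b ≤ (n : ℝ) ^ (-(α * (1 + δ))) / 2 := by
    have h := le_rpow_mul_of_le_rpow hn0.le (hGpos b (hM b (hMy.trans hyb.le)).2).le
      (by nlinarith) (hM b (hMy.trans hyb.le)).1.2 hGb
    rw [hexp, rpow_sub hn0] at h
    exact h.trans (div_le_div_of_nonneg_left (by positivity) two_pos hn_half)
  refine ⟨y, ⟨(hM y hMy).2, hyb.le⟩, hGy, ?_⟩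
  have hN := rpow_pos_of_pos hn0 (-(α * (1 + ε)))
  rw [show -(α * (1 + δ)) = -(α * (1 + ε)) + α * (ε - δ) by ring, rpow_add hn0] at hFy hFb
  nlinarith

lemma eventually_rpow_le_of_lower_bound (hα : 0 < α) (hε : 0 < ε) (hGcont : Continuous G)
    (hGanti : Antitone G) (hGpos : ∀ x, 0 ≤ x → 0 < G x) (hG0 : Tendsto G atTop (nhds 0))
    (hFpos : ∀ x, 0 ≤ x → 0 < F x)
    (hlog : Tendsto (fun x => log (F x) / (α * log (G x))) atTop (nhds 1))
    (hP : ∀ n b, 0 < b → 0 < 1 - F b → ∀ y ∈ Icc 0 b,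
      (F y - F b) / (1 - F b) * (1 - G y) ^ n ≤ P n b) :
    ∀ᶠ n : ℕ in atTop, ∀ b, 0 < b → 0 < 1 - F b → G b ≤ (n : ℝ) ^ (-(1 + ε)) →
      (n : ℝ) ^ (-(α * (1 + ε))) ≤ P n b := by
  filter_upwards [eventually_ge_atTop 2,
    eventually_exists_inv_level hα hε hGcont hGanti hGpos hG0 hFpos hlog]
    with n hn2 hlevel b hb hFb1 hGb
  obtain ⟨y, hy, hGy, hFyb⟩ := hlevel b hGb
  have hFyb0 : 0 ≤ F y - F b := hFyb.trans' (by positivity)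
  calc (n : ℝ) ^ (-(α * (1 + ε)))
      = exp 2 * (n : ℝ) ^ (-(α * (1 + ε))) * exp (-2) := by
        rw [mul_right_comm, ← exp_add]; simp
    _ ≤ (F y - F b) / (1 - F b) * (1 - G y) ^ n :=
        mul_le_mul (hFyb.trans (le_div_self hFyb0 hFb1 (by linarith [hFpos b hb.le])))
          (hGy ▸ exp_neg_two_le_one_sub_inv_pow hn2) (exp_pos _).le (div_nonneg hFyb0 hFb1.le)
    _ ≤ P n b := hP n b hb hFb1 y hy

lemma eventually_exists_mul_log_div_level (hα : 0 < α) (hε : 0 < ε) (hGcont : Continuous G)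
    (hGanti : Antitone G) (hGpos : ∀ x, 0 ≤ x → 0 < G x) (hG0 : Tendsto G atTop (nhds 0))
    (hFpos : ∀ x, 0 ≤ x → 0 < F x)
    (hlog : Tendsto (fun x => log (F x) / (α * log (G x))) atTop (nhds 1)) :
    ∀ᶠ n : ℕ in atTop, ∀ b, G b ≤ (n : ℝ) ^ (-(1 + ε)) → F b ≤ 2⁻¹ ∧
      ∃ x ∈ Icc 0 b, G x = α * log n / n ∧ F x ≤ (n : ℝ) ^ (-(α * (1 - ε / 2))) := by
  set δ := min (ε / 4) (1 / 2)
  have hδ0 : 0 < δ := by positivity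
  have hδε : δ ≤ ε / 4 := min_le_left _ _
  have hδ1 : δ ≤ 1 / 2 := min_le_right _ _
  obtain ⟨M, hM⟩ := eventually_atTop.mp ((eventually_rpow_le_and_le_rpow hα hG0 hGpos hFpos hlog
    hδ0).and (eventually_ge_atTop 0))
  filter_upwards [eventually_gt_atTop 1,
    eventually_le_natCast_rpow (G M)⁻¹ (by linarith : 0 < 1 - δ),
    ((tendsto_log_atTop.comp tendsto_natCast_atTop_atTop).const_mul_atTop hα).eventually_ge_atTop 1,
    eventually_mul_log_le_natCast_rpow α hδ0,
    eventually_le_natCast_rpow 2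
      (mul_pos (by linarith) (mul_pos hα (by linarith)) : 0 < (1 + ε) * (α * (1 - δ)))]
    with n hn1 hnM hlog1 hlogδ hn2 b hGb
  have hn1' : (1 : ℝ) < n := by exact_mod_cast hn1
  have hn0 : (0 : ℝ) < n := by linarith
  have hGM : 0 < G M := hGpos M (hM M le_rfl).2
  set t := α * log n / n
  have ht0 : 0 ≤ t := by simp only [Function.comp_apply] at hlog1; positivity
  have ht : t ≤ (n : ℝ) ^ (δ - 1) := by
    rw [rpow_sub_one hn0.ne']
    exact div_le_div_of_nonneg_right hlogδ hn0.le
  have htM : t ≤ G M := by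
    rw [show δ - 1 = -(1 - δ) by ring, rpow_neg hn0.le] at ht
    exact ht.trans (inv_le_of_inv_le₀ hGM hnM)
  have hbt : G b < t := (lt_inv_of_le_rpow_neg hn1' hε hGb).trans_le <| by
    rw [inv_eq_one_div]
    exact div_le_div_of_nonneg_right hlog1 hn0.le
  obtain ⟨x, ⟨hMx, hxb⟩, hGx⟩ := exists_mem_Ico_eq_of_antitone hGcont hGanti hbt htM
  have hMb : M ≤ b := hMx.trans hxb.le
  refine ⟨?_, x, ⟨(hM x hMx).2, hxb.le⟩, hGx, ?_⟩
  · have h := le_rpow_mul_of_le_rpow hn0.le (hGpos b (hM b hMb).2).le (by nlinarith)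
      (hM b hMb).1.2 hGb
    rw [neg_mul, rpow_neg hn0.le] at h
    exact h.trans (inv_anti₀ two_pos hn2)
  · refine (le_rpow_mul_of_le_rpow hn0.le (hGx ▸ ht0) (by nlinarith) (hM x hMx).1.2
      (hGx ▸ ht)).trans (rpow_le_rpow_of_exponent_le hn1'.le ?_)
    nlinarith [mul_nonneg hα.le (sq_nonneg δ), mul_nonneg hα.le (by linarith : 0 ≤ ε / 2 - 2 * δ)]

lemma eventually_le_rpow_of_upper_bound (hα : 0 < α) (hε : 0 < ε) (hGcont : Continuous G)
    (hGanti : Antitone G) (hGpos : ∀ x, 0 ≤ x → 0 < G x) (hG0 : Tendsto G atTop (nhds 0))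
    (hFpos : ∀ x, 0 ≤ x → 0 < F x)
    (hlog : Tendsto (fun x => log (F x) / (α * log (G x))) atTop (nhds 1))
    (hP : ∀ n b, 0 < b → 0 < 1 - F b → ∀ x ∈ Icc 0 b,
      P n b ≤ (F x - F b) / (1 - F b) + (1 - G x) ^ n) :
    ∀ᶠ n : ℕ in atTop, ∀ b, 0 < b → 0 < 1 - F b → G b ≤ (n : ℝ) ^ (-(1 + ε)) →
      P n b ≤ (n : ℝ) ^ (-(α * (1 - ε))) := by
  filter_upwards [eventually_gt_atTop 1,
    eventually_exists_mul_log_div_level hα hε hGcont hGanti hGpos hG0 hFpos hlog,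
    eventually_mul_log_le_natCast_rpow α one_pos,
    eventually_le_natCast_rpow 3 (by positivity : 0 < α * ε / 2)]
    with n hn1 hlevel hlogn hn3 b hb hFb1 hGb
  obtain ⟨hFb, x, hx, hGx, hFx⟩ := hlevel b hGb
  have hn0 : (0 : ℝ) < n := by exact_mod_cast hn1.trans' one_pos
  have hN := rpow_pos_of_pos hn0 (-(α * (1 - ε / 2)))
  calc P n b ≤ (F x - F b) / (1 - F b) + (1 - G x) ^ n := hP n b hb hFb1 x hx
    _ ≤ 2 * (n : ℝ) ^ (-(α * (1 - ε / 2))) + (n : ℝ) ^ (-α) := by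
        gcongr
        · rw [div_le_iff₀ hFb1]
          nlinarith [hFpos b hb.le]
        · exact hGx ▸ one_sub_mul_log_div_pow_le (by omega) (by simpa using hlogn)
    _ ≤ 3 * (n : ℝ) ^ (-(α * (1 - ε / 2))) := by
        have := rpow_le_rpow_of_exponent_le (by exact_mod_cast hn1.le : (1 : ℝ) ≤ n)
          (show -α ≤ -(α * (1 - ε / 2)) by nlinarith)
        linarith
    _ ≤ (n : ℝ) ^ (-(α * (1 - ε))) := by
        rw [show -(α * (1 - ε)) = -(α * (1 - ε / 2)) + α * ε / 2 by ring, rpow_add hn0]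
        nlinarith

theorem eventually_abs_neg_log_div_sub_one_le (hα : 0 < α) (hε : 0 < ε) (hGcont : Continuous G)
    (hGanti : Antitone G) (hGpos : ∀ x, 0 ≤ x → 0 < G x) (hG0 : Tendsto G atTop (nhds 0))
    (hFpos : ∀ x, 0 ≤ x → 0 < F x)
    (hlog : Tendsto (fun x => log (F x) / (α * log (G x))) atTop (nhds 1))
    (hlow : ∀ n b, 0 < b → 0 < 1 - F b → ∀ y ∈ Icc 0 b,
      (F y - F b) / (1 - F b) * (1 - G y) ^ n ≤ P n b)
    (hup : ∀ n b, 0 < b → 0 < 1 - F b → ∀ x ∈ Icc 0 b,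
      P n b ≤ (F x - F b) / (1 - F b) + (1 - G x) ^ n) :
    ∀ᶠ n : ℕ in atTop, ∀ b, 0 < b → 0 < 1 - F b → (n : ℝ) ^ (1 + ε) * G b ≤ 1 →
      |-log (P n b) / (α * log n) - 1| ≤ ε := by
  filter_upwards [eventually_gt_atTop 1,
    eventually_rpow_le_of_lower_bound hα hε hGcont hGanti hGpos hG0 hFpos hlog hlow,
    eventually_le_rpow_of_upper_bound hα hε hGcont hGanti hGpos hG0 hFpos hlog hup]
    with n hn hlo hhi b hb hFb hGb
  have hn0 : (0 : ℝ) < n := by positivity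
  have hGb' : G b ≤ (n : ℝ) ^ (-(1 + ε)) := by
    rw [rpow_neg hn0.le, ← one_div, le_div_iff₀ (by positivity), mul_comm]
    exact hGb
  exact abs_neg_log_div_sub_one_le (by exact_mod_cast hn) hα (hlo b hb hFb hGb')
    (hhi b hb hFb hGb')

end TailBounds

lemma ProbabilityTheory.continuous_cdf (ν : Measure ℝ) [IsProbabilityMeasure ν]
    [NullSingletonClass ν] :
    Continuous (cdf ν) := by
  refine continuous_iff_continuousAt.mpr fun x => ?_
  rw [(monotone_cdf ν).continuousAt_iff_leftLim_eq_rightLim, (cdf ν).rightLim_eq]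
  have hx : ν {x} = 0 := measure_singleton x
  rw [← measure_cdf ν, (cdf ν).measure_singleton, ENNReal.ofReal_eq_zero] at hx
  exact le_antisymm ((monotone_cdf ν).leftLim_le le_rfl) (by linarith)

section Tail

variable {Ω : Type*} [MeasurableSpace Ω] {μ : Measure Ω} [IsProbabilityMeasure μ] {X : Ω → ℝ}

lemma measureReal_lt_eq_one_sub_cdf (hX : Measurable X) (x : ℝ) :
    μ.real {ω | x < X ω} = 1 - cdf (μ.map X) x := by
  have := Measure.isProbabilityMeasure_map (μ := μ) hX.aemeasurable
  rw [cdf_eq_real, map_measureReal_apply hX measurableSet_Iic,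
    ← probReal_compl_eq_one_sub (hX measurableSet_Iic)]
  congr 1
  ext ω
  simp

lemma measureReal_le_eq_one_sub (hX : Measurable X) (x : ℝ) :
    μ.real {ω | X ω ≤ x} = 1 - μ.real {ω | x < X ω} := by
  rw [← probReal_compl_eq_one_sub (measurableSet_lt measurable_const hX)]
  simp only [compl_ofPred, not_lt]

lemma measureReal_lt_eq_of_measureReal_le_eq_div {L : Ω → ℝ} (hX : Measurable X)
    (hL : Measurable L) {y b : ℝ} (hb : 0 < μ.real {ω | L ω ≤ b})
    (h : μ.real {ω | X ω ≤ y} = μ.real {ω | L ω ≤ y} / μ.real {ω | L ω ≤ b}) :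
    μ.real {ω | y < X ω}
      = (μ.real {ω | y < L ω} - μ.real {ω | b < L ω}) / (1 - μ.real {ω | b < L ω}) := by
  rw [measureReal_le_eq_one_sub hX, measureReal_le_eq_one_sub hL,
    measureReal_le_eq_one_sub hL] at h
  rw [measureReal_le_eq_one_sub hL] at hb
  field_simp at h ⊢
  linarith

lemma continuous_measureReal_lt (hX : Measurable X) (hac : μ.map X ≪ volume) :
    Continuous fun x => μ.real {ω | x < X ω} := by
  have := Measure.isProbabilityMeasure_map (μ := μ) hX.aemeasurable
  have : NullSingletonClass (μ.map X) := ⟨fun x => hac Real.volume_singleton⟩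
  simp only [measureReal_lt_eq_one_sub_cdf hX]
  exact continuous_const.sub (continuous_cdf _)

lemma tendsto_measureReal_lt_atTop (hX : Measurable X) :
    Tendsto (fun x => μ.real {ω | x < X ω}) atTop (nhds 0) := by
  have := Measure.isProbabilityMeasure_map (μ := μ) hX.aemeasurable
  simpa only [measureReal_lt_eq_one_sub_cdf hX, sub_self] using
    (tendsto_const_nhds (x := (1 : ℝ))).sub (tendsto_cdf_atTop (μ.map X))

lemma antitone_measureReal_lt (X : Ω → ℝ) : Antitone fun x => μ.real {ω | x < X ω} :=
  fun _ _ hxy => measureReal_mono fun _ hω => hxy.trans_lt hω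

end Tail

lemma setOf_natCast_lt_retransTime {Ω : Type*} (A : ℕ → Ω → ℝ) (X : Ω → ℝ) (n : ℕ) :
    {ω | (n : ℕ∞) < retransTime A X ω} = ⋂ k ∈ Finset.Icc 1 n, {ω | A k ω ≤ X ω} := by
  ext ω
  simp only [retransTime, mem_ofPred_eq, mem_iInter, Finset.mem_Icc]
  rw [← ENat.add_one_le_iff (ENat.natCast_ne_top n), le_sInf_iff]
  constructor
  · intro h k hk
    by_contra! hlt
    have := h k ⟨k, rfl, hk.1, hlt⟩
    norm_cast at this
    omega
  · rintro h _ ⟨k, rfl, hk, hlt⟩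
    by_contra! hkn
    norm_cast at hkn
    exact (h k ⟨hk, by omega⟩).not_gt hlt

section Retransmission

variable {Ω : Type*} [MeasurableSpace Ω] {μ : Measure Ω} {A : ℕ → Ω → ℝ} {X : Ω → ℝ}

lemma measure_biInter_le_eq_pow (hA : ∀ i, Measurable (A i)) (hindep : iIndepFun A μ)
    (hident : ∀ i, μ.map (A i) = μ.map (A 0)) (s : Finset ℕ) (y : ℝ) :
    μ (⋂ k ∈ s, {ω | A k ω ≤ y}) = μ {ω | A 0 ω ≤ y} ^ s.card := by
  have hk : ∀ k, μ (A k ⁻¹' Iic y) = μ {ω | A 0 ω ≤ y} := fun k => by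
    rw [← Measure.map_apply (hA k) measurableSet_Iic, hident k,
      Measure.map_apply (hA 0) measurableSet_Iic]
    rfl
  change μ (⋂ k ∈ s, A k ⁻¹' Iic y) = _
  rw [hindep.meas_biInter fun k _ => ⟨Iic y, measurableSet_Iic, rfl⟩,
    Finset.prod_congr rfl fun k _ => hk k, Finset.prod_const]

variable [IsProbabilityMeasure μ]

lemma measureReal_biInter_Icc_le_eq_pow (hA : ∀ i, Measurable (A i)) (hindep : iIndepFun A μ)
    (hident : ∀ i, μ.map (A i) = μ.map (A 0)) (n : ℕ) (y : ℝ) :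
    μ.real (⋂ k ∈ Finset.Icc 1 n, {ω | A k ω ≤ y}) = (1 - μ.real {ω | y < A 0 ω}) ^ n := by
  rw [measureReal_def, measure_biInter_le_eq_pow hA hindep hident, Nat.card_Icc,
    add_tsub_cancel_right, ENNReal.toReal_pow, ← measureReal_def, measureReal_le_eq_one_sub (hA 0)]

lemma measureReal_lt_mul_pow_le_retransTime (hA : ∀ i, Measurable (A i))
    (hindep : iIndepFun A μ) (hident : ∀ i, μ.map (A i) = μ.map (A 0))
    (hX : IndepFun X (fun ω i => A i ω) μ) (n : ℕ) (y : ℝ) :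
    μ.real {ω | y < X ω} * (1 - μ.real {ω | y < A 0 ω}) ^ n
      ≤ μ.real {ω | (n : ℕ∞) < retransTime A X ω} := by
  have hS : MeasurableSet {f : ℕ → ℝ | ∀ k ∈ Finset.Icc 1 n, f k ≤ y} := by
    simp only [ofPred_forall]
    exact .biInter (to_countable _) fun k _ =>
      measurableSet_le (measurable_pi_apply k) measurable_const
  have hinter := hX.measure_inter_preimage_eq_mul _ _ (measurableSet_Ioi (a := y)) hS
  have hbelow : ⋂ k ∈ Finset.Icc 1 n, {ω | A k ω ≤ y}
      = (fun ω i => A i ω) ⁻¹' {f : ℕ → ℝ | ∀ k ∈ Finset.Icc 1 n, f k ≤ y} := by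
    ext ω; simp
  calc _ = μ.real (X ⁻¹' Ioi y ∩ (fun ω i => A i ω) ⁻¹' {f | ∀ k ∈ Finset.Icc 1 n, f k ≤ y}) := by
        rw [← measureReal_biInter_Icc_le_eq_pow hA hindep hident, hbelow]
        simp only [measureReal_def, hinter, ENNReal.toReal_mul]
        rfl
    _ ≤ _ := by
        rw [← hbelow, setOf_natCast_lt_retransTime]
        refine measureReal_mono fun ω ⟨hy, hω⟩ => ?_
        simp only [mem_iInter, mem_ofPred_eq] at hω ⊢
        exact fun k hk => (hω k hk).trans hy.le

lemma measureReal_retransTime_le (hA : ∀ i, Measurable (A i)) (hindep : iIndepFun A μ)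
    (hident : ∀ i, μ.map (A i) = μ.map (A 0)) (n : ℕ) (x : ℝ) :
    μ.real {ω | (n : ℕ∞) < retransTime A X ω}
      ≤ μ.real {ω | x < X ω} + (1 - μ.real {ω | x < A 0 ω}) ^ n := by
  rw [← measureReal_biInter_Icc_le_eq_pow hA hindep hident]
  refine (measureReal_mono ?_).trans (measureReal_union_le _ _)
  rw [setOf_natCast_lt_retransTime]
  intro ω hω
  simp only [mem_iInter] at hω
  by_cases hx : x < X ω
  · exact Or.inl hx
  · exact Or.inr (mem_iInter₂.mpr fun k hk => (hω k hk).trans (not_lt.mp hx))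

end Retransmission

theorem retrans_log_powerlaw_general
    {Ω : Type*} [MeasurableSpace Ω] (μ : Measure Ω) [IsProbabilityMeasure μ]
    (A : ℕ → Ω → ℝ) (L : Ω → ℝ) (Lb : ℝ → Ω → ℝ)
    (hAmeas : ∀ i, Measurable (A i))
    (hAindep : iIndepFun A μ)
    (hAident : ∀ i, μ.map (A i) = μ.map (A 0))
    (hAcont : μ.map (A 0) ≪ (volume : Measure ℝ))
    (hLmeas : Measurable L)
    (hGpos : ∀ x : ℝ, 0 ≤ x → 0 < (μ {ω | x < A 0 ω}).toReal)
    (hFpos : ∀ x : ℝ, 0 ≤ x → 0 < (μ {ω | x < L ω}).toReal)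
    (hLbmeas : ∀ b : ℝ, Measurable (Lb b))
    (hLbindep : ∀ b : ℝ, IndepFun (Lb b) (fun ω i => A i ω) μ)
    (hLbcdf : ∀ b : ℝ, 0 < b → 0 < (μ {ω | L ω ≤ b}).toReal →
      ∀ x ∈ Set.Icc (0 : ℝ) b,
        (μ {ω | Lb b ω ≤ x}).toReal
          = (μ {ω | L ω ≤ x}).toReal / (μ {ω | L ω ≤ b}).toReal)
    (α : ℝ) (hα : 0 < α)
    (hlog : Filter.Tendsto
      (fun x : ℝ => Real.log (μ {ω | x < L ω}).toReal / (α * Real.log (μ {ω | x < A 0 ω}).toReal))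
      Filter.atTop (nhds 1)) :
    ∀ ε > (0 : ℝ), ∃ n₀ : ℕ, 0 < n₀ ∧ ∀ n : ℕ, n₀ ≤ n →
      ∀ b : ℝ, 0 < b → 0 < (μ {ω | L ω ≤ b}).toReal →
        (n : ℝ) ^ ((1 : ℝ) + ε) * (μ {ω | b < A 0 ω}).toReal ≤ 1 →
          |(-Real.log (μ {ω | (n : ℕ∞) < retransTime A (Lb b) ω}).toReal) / (α * Real.log n) - 1|
            ≤ ε := by
  intro ε hε
  have hLb : ∀ b, 0 < b → 0 < 1 - μ.real {ω | b < L ω} → ∀ y ∈ Icc 0 b,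
      μ.real {ω | y < Lb b ω}
        = (μ.real {ω | y < L ω} - μ.real {ω | b < L ω}) / (1 - μ.real {ω | b < L ω}) := by
    intro b hb hFb y hy
    rw [← measureReal_le_eq_one_sub hLmeas] at hFb
    exact measureReal_lt_eq_of_measureReal_le_eq_div (hLbmeas b) hLmeas hFb (hLbcdf b hb hFb y hy)
  obtain ⟨n₀, hn₀⟩ := eventually_atTop.mp <| eventually_abs_neg_log_div_sub_one_le
    (P := fun n b => μ.real {ω | (n : ℕ∞) < retransTime A (Lb b) ω}) hα hε
    (continuous_measureReal_lt (hAmeas 0) hAcont) (antitone_measureReal_lt (A 0)) hGpos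
    (tendsto_measureReal_lt_atTop (hAmeas 0)) hFpos hlog
    (fun n b hb hFb y hy => hLb b hb hFb y hy ▸
      measureReal_lt_mul_pow_le_retransTime hAmeas hAindep hAident (hLbindep b) n y)
    (fun n b hb hFb x hx => hLb b hb hFb x hx ▸
      measureReal_retransTime_le hAmeas hAindep hAident n x)
  refine ⟨max n₀ 1, by omega, fun n hn b hb hFb hGb => hn₀ n (le_of_max_le_left hn) b hb ?_ hGb⟩
  exact measureReal_le_eq_one_sub (μ := μ) hLmeas b ▸ hFb

/-- Theorem 1: logarithmic power-law asymptotics in the region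
`n^(1+ε) P[A > b] ≤ 1`. -/
theorem retrans_log_powerlaw
    {Ω : Type*} [MeasurableSpace Ω] (μ : Measure Ω) [IsProbabilityMeasure μ]
    (A : ℕ → Ω → ℝ) (L : Ω → ℝ) (Lb : ℝ → Ω → ℝ)
    (hAmeas : ∀ i, Measurable (A i))
    (hAindep : iIndepFun A μ)
    (hAident : ∀ i, μ.map (A i) = μ.map (A 0))
    (hAcont : μ.map (A 0) ≪ (volume : Measure ℝ))
    (hLmeas : Measurable L)
    (hLcont : μ.map L ≪ (volume : Measure ℝ))
    (hGpos : ∀ x : ℝ, 0 ≤ x → 0 < (μ {ω | x < A 0 ω}).toReal)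
    (hFpos : ∀ x : ℝ, 0 ≤ x → 0 < (μ {ω | x < L ω}).toReal)
    (hLbmeas : ∀ b : ℝ, Measurable (Lb b))
    (hLbindep : ∀ b : ℝ, IndepFun (Lb b) (fun ω i => A i ω) μ)
    (hLbrange : ∀ b : ℝ, 0 < b → ∀ᵐ ω ∂μ, Lb b ω ∈ Set.Icc 0 b)
    (hLbcdf : ∀ b : ℝ, 0 < b → 0 < (μ {ω | L ω ≤ b}).toReal →
      ∀ x ∈ Set.Icc (0 : ℝ) b,
        (μ {ω | Lb b ω ≤ x}).toReal
          = (μ {ω | L ω ≤ x}).toReal / (μ {ω | L ω ≤ b}).toReal)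
    (α : ℝ) (hα : 0 < α)
    (hlog : Filter.Tendsto
      (fun x : ℝ => Real.log (μ {ω | x < L ω}).toReal / (α * Real.log (μ {ω | x < A 0 ω}).toReal))
      Filter.atTop (nhds 1)) :
    ∀ ε > (0 : ℝ), ∃ n₀ : ℕ, 0 < n₀ ∧ ∀ n : ℕ, n₀ ≤ n →
      ∀ b : ℝ, 0 < b → 0 < (μ {ω | L ω ≤ b}).toReal →
        (n : ℝ) ^ ((1 : ℝ) + ε) * (μ {ω | b < A 0 ω}).toReal ≤ 1 →
          |(-Real.log (μ {ω | (n : ℕ∞) < retransTime A (Lb b) ω}).toReal) / (α * Real.log n) - 1|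
            ≤ ε :=
  retrans_log_powerlaw_general μ A L Lb hAmeas hAindep hAident hAcont hLmeas hGpos hFpos hLbmeas
    hLbindep hLbcdf α hα hlog
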